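/- Under the penny construction with inequalities (1)–(3) and E₀ < 0, if T ⊊ T′ ⊆ Fin n and every two distinct indices i, j ∈ T′ satisfy dist(x i, x j) ≥ √2·n, then E(T′) < E(T). (The total energy strictly decreases with the cardinality of the independent set that is left.) -/

import Mathlib

/-- The total Buckingham–Coulomb interaction (per direction) between two unit-charge ion
pairs whose planar centres are at distance `r`, one ion of each pair at height `0` and
the other at height `1`. -/
noncomputable def pennyF (A11 B11 C11 A12 B12 C12 r : ℝ) : ℝ :=
  A11 * Real.exp (-(B11 * r)) - C11 / r ^ 6 + 1 / r +
    A12 * Real.exp (-(B12 * Real.sqrt (r ^ 2 + 1))) - C12 / (r ^ 2 + 1) ^ 3 -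
    1 / Real.sqrt (r ^ 2 + 1)

/-- The internal Buckingham–Coulomb energy of a single pair: two opposite unit charges at
distance `1`. -/
noncomputable def pennyE0 (A12 B12 C12 : ℝ) : ℝ := A12 * Real.exp (-B12) - C12 - 1

/-- Position in `ℝ³` of the ion `(i, b)`: the planar point `x i` at height `0` if
`b = false` (positive ion) and at height `1` if `b = true` (negative ion). -/
noncomputable def pennyPos {n : ℕ} (x : Fin n → EuclideanSpace ℝ (Fin 2))
    (q : Fin n × Bool) : EuclideanSpace ℝ (Fin 3) :=
  WithLp.toLp 2 ![x q.1 0, x q.1 1, if q.2 then 1 else 0]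

/-- The Buckingham–Coulomb energy between two distinct ions: same-sign ions use the
parameters `(A11, B11, C11)` and Coulomb term `+1/r`, opposite-sign ions use
`(A12, B12, C12)` and Coulomb term `−1/r`. -/
noncomputable def pennyU (A11 B11 C11 A12 B12 C12 : ℝ) {n : ℕ}
    (x : Fin n → EuclideanSpace ℝ (Fin 2)) (a b : Fin n × Bool) : ℝ :=
  if a.2 = b.2 then
    A11 * Real.exp (-(B11 * dist (pennyPos x a) (pennyPos x b))) -
      C11 / dist (pennyPos x a) (pennyPos x b) ^ 6 +
      1 / dist (pennyPos x a) (pennyPos x b)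
  else
    A12 * Real.exp (-(B12 * dist (pennyPos x a) (pennyPos x b))) -
      C12 / dist (pennyPos x a) (pennyPos x b) ^ 6 -
      1 / dist (pennyPos x a) (pennyPos x b)

/-- The total energy of a set `S` of ions: the sum of pairwise energies over all
unordered pairs of distinct ions in `S` (realised as half the ordered sum). -/
noncomputable def pennyES (A11 B11 C11 A12 B12 C12 : ℝ) {n : ℕ}
    (x : Fin n → EuclideanSpace ℝ (Fin 2)) (S : Finset (Fin n × Bool)) : ℝ :=
  (∑ p ∈ S.offDiag, pennyU A11 B11 C11 A12 B12 C12 x p.1 p.2) / 2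

/-- The total energy of the `2|T|` ions whose indices lie in `T`. -/
noncomputable def pennyET (A11 B11 C11 A12 B12 C12 : ℝ) {n : ℕ}
    (x : Fin n → EuclideanSpace ℝ (Fin 2)) (T : Finset (Fin n)) : ℝ :=
  pennyES A11 B11 C11 A12 B12 C12 x (T ×ˢ (Finset.univ : Finset Bool))

/-! Each index contributes the internal energy `E₀` of its own ion pair, and each ordered pair
of distinct indices contributes its four cross interactions, which total `2 f(r)`; hence
`E(T) = |T| E₀ + ∑_{i ≠ j ∈ T} f(|x i - x j|)`. Passing from `T` to `T'` adds at least one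
`E₀ < 0` and fewer than `n²` new terms `f(r)` with `r ≥ √2 n`, each at most `-E₀ / n²` by (2). -/

open Finset

theorem Finset.sum_offDiag_eq_sum_sum_sub {α M : Type*} [DecidableEq α] [AddCommGroup M]
    (s : Finset α) (f : α → α → M) :
    ∑ p ∈ s.offDiag, f p.1 p.2 = ∑ a ∈ s, ∑ b ∈ s, f a b - ∑ a ∈ s, f a a := by
  rw [← sum_product' s s f, ← diag_union_offDiag, sum_union (disjoint_diag_offDiag s), diag,
    sum_map]
  simp

theorem Finset.sum_offDiag_product {α β M : Type*} [DecidableEq α] [DecidableEq β]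
    [AddCommGroup M] (s : Finset α) (t : Finset β) (f : α × β → α × β → M) :
    ∑ p ∈ (s ×ˢ t).offDiag, f p.1 p.2 =
      ∑ i ∈ s, ∑ q ∈ t.offDiag, f (i, q.1) (i, q.2) +
        ∑ p ∈ s.offDiag, ∑ a ∈ t, ∑ b ∈ t, f (p.1, a) (p.2, b) := by
  rw [sum_offDiag_eq_sum_sum_sub (s ×ˢ t),
    sum_offDiag_eq_sum_sum_sub s fun i j => ∑ a ∈ t, ∑ b ∈ t, f (i, a) (j, b),
    sum_congr rfl fun i _ => sum_offDiag_eq_sum_sum_sub t fun a b => f (i, a) (i, b)]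
  simp only [sum_product, sum_sub_distrib]
  rw [sum_congr rfl fun _ _ => sum_comm]
  abel

theorem Finset.sum_lt_of_card_lt_of_forall_mul_le {ι : Type*} {s : Finset ι} {f : ι → ℝ}
    {N : ℕ} {D : ℝ} (hD : 0 < D) (hs : s.card < N) (hf : ∀ i ∈ s, N * f i ≤ D) :
    ∑ i ∈ s, f i < D := by
  have hN : (0 : ℝ) < N := by exact_mod_cast Nat.zero_lt_of_lt hs
  have hsum : N * ∑ i ∈ s, f i ≤ s.card * D := by
    simpa [mul_sum] using sum_le_card_nsmul s _ D hf
  have hcard : (s.card : ℝ) * D < N * D := mul_lt_mul_of_pos_right (by exact_mod_cast hs) hD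
  exact lt_of_mul_lt_mul_left (hsum.trans_lt hcard) hN.le

section Penny

variable {n : ℕ} (x : Fin n → EuclideanSpace ℝ (Fin 2)) {A11 B11 C11 A12 B12 C12 : ℝ}

theorem dist_pennyPos (i j : Fin n) (s t : Bool) :
    dist (pennyPos x (i, s)) (pennyPos x (j, t)) =
      √(dist (x i) (x j) ^ 2 + ((if s then 1 else 0) - (if t then 1 else 0)) ^ 2) := by
  rw [EuclideanSpace.dist_eq, EuclideanSpace.dist_eq (x i) (x j), Fin.sum_univ_three,
    Fin.sum_univ_two, Real.sq_sqrt (by positivity)]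
  simp [pennyPos, Real.dist_eq, sq_abs]

theorem pennyU_same_sign (i j : Fin n) (s : Bool) :
    pennyU A11 B11 C11 A12 B12 C12 x (i, s) (j, s) =
      A11 * Real.exp (-(B11 * dist (x i) (x j))) - C11 / dist (x i) (x j) ^ 6 +
        1 / dist (x i) (x j) := by
  simp [pennyU, dist_pennyPos, Real.sqrt_sq dist_nonneg]

theorem pennyU_of_sign_ne (i j : Fin n) {s t : Bool} (hst : s ≠ t) :
    pennyU A11 B11 C11 A12 B12 C12 x (i, s) (j, t) =
      A12 * Real.exp (-(B12 * √(dist (x i) (x j) ^ 2 + 1))) -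
        C12 / (dist (x i) (x j) ^ 2 + 1) ^ 3 - 1 / √(dist (x i) (x j) ^ 2 + 1) := by
  have hsqrt : √(dist (x i) (x j) ^ 2 + 1) ^ 6 = (dist (x i) (x j) ^ 2 + 1) ^ 3 := by
    rw [show 6 = 2 * 3 from rfl, pow_mul, Real.sq_sqrt (by positivity)]
  cases s <;> cases t <;> simp_all [pennyU, dist_pennyPos]

theorem pennyU_self_of_sign_ne (i : Fin n) {s t : Bool} (hst : s ≠ t) :
    pennyU A11 B11 C11 A12 B12 C12 x (i, s) (i, t) = pennyE0 A12 B12 C12 := by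
  simp [pennyU_of_sign_ne x i i hst, pennyE0]

theorem sum_pennyU_signs (i j : Fin n) :
    ∑ s : Bool, ∑ t : Bool, pennyU A11 B11 C11 A12 B12 C12 x (i, s) (j, t) =
      2 * pennyF A11 B11 C11 A12 B12 C12 (dist (x i) (x j)) := by
  simp only [Fintype.sum_bool, pennyU_same_sign, pennyF,
    pennyU_of_sign_ne x i j (by decide : true ≠ false),
    pennyU_of_sign_ne x i j (by decide : false ≠ true)]
  ring

theorem pennyET_eq (T : Finset (Fin n)) :
    pennyET A11 B11 C11 A12 B12 C12 x T =
      T.card * pennyE0 A12 B12 C12 +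
        ∑ p ∈ T.offDiag, pennyF A11 B11 C11 A12 B12 C12 (dist (x p.1) (x p.2)) := by
  have hself (i : Fin n) : ∑ q ∈ (univ : Finset Bool).offDiag,
      pennyU A11 B11 C11 A12 B12 C12 x (i, q.1) (i, q.2) = 2 * pennyE0 A12 B12 C12 := by
    rw [sum_congr rfl fun q hq => pennyU_self_of_sign_ne x i (mem_offDiag.1 hq).2.2]
    simp [offDiag_card]
  rw [pennyET, pennyES, sum_offDiag_product (f := pennyU A11 B11 C11 A12 B12 C12 x)]
  simp only [hself, sum_pennyU_signs, sum_const, ← mul_sum, nsmul_eq_mul]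
  ring

end Penny

theorem penny_energy_decreasing_on_independent_general {n : ℕ} (x : Fin n → EuclideanSpace ℝ (Fin 2))
    (A11 B11 C11 A12 B12 C12 : ℝ)
    (hE0 : pennyE0 A12 B12 C12 < 0)
    (h2 : ∀ r : ℝ, Real.sqrt 2 * n ≤ r →
      (n : ℝ) ^ 2 * |pennyF A11 B11 C11 A12 B12 C12 r| ≤ -pennyE0 A12 B12 C12)
    (T T' : Finset (Fin n)) (hTT : T ⊂ T')
    (hind : ∀ i ∈ T', ∀ j ∈ T', i ≠ j → Real.sqrt 2 * n ≤ dist (x i) (x j)) :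
    pennyET A11 B11 C11 A12 B12 C12 x T' < pennyET A11 B11 C11 A12 B12 C12 x T := by
  have hgrow : T.card < T'.card := card_lt_card hTT
  have hpos : 0 < T'.card := Nat.zero_lt_of_lt hgrow
  have hcount : (T'.offDiag \ T.offDiag).card < n ^ 2 := calc
    _ ≤ T'.offDiag.card := card_le_card sdiff_subset
    _ < T'.card ^ 2 := by rw [offDiag_card, sq]; exact Nat.sub_lt (Nat.mul_pos hpos hpos) hpos
    _ ≤ n ^ 2 := by gcongr; simpa using card_le_univ T'
  have hnew : ∑ p ∈ T'.offDiag \ T.offDiag,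
      pennyF A11 B11 C11 A12 B12 C12 (dist (x p.1) (x p.2)) < -pennyE0 A12 B12 C12 := by
    refine sum_lt_of_card_lt_of_forall_mul_le (neg_pos.2 hE0) hcount fun p hp => ?_
    obtain ⟨hp1, hp2, hne⟩ := mem_offDiag.1 (mem_sdiff.1 hp).1
    push_cast
    exact (mul_le_mul_of_nonneg_left (le_abs_self _) (by positivity)).trans
      (h2 _ (hind _ hp1 _ hp2 hne))
  have hinternal : T'.card * pennyE0 A12 B12 C12 ≤ (T.card + 1 : ℝ) * pennyE0 A12 B12 C12 :=
    mul_le_mul_of_nonpos_right (by exact_mod_cast hgrow) hE0.le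
  rw [pennyET_eq, pennyET_eq, ← sum_sdiff (offDiag_mono hTT.subset)]
  linarith

/-- Under the penny construction with inequalities (1)–(3) and `E₀ < 0`: if `T ⊊ T′` and
`T′` is independent in the tangency graph (all planar distances at least `√2·n`), then
the total energy of the ions indexed by `T′` is strictly smaller than that of the ions
indexed by `T`. -/
theorem penny_energy_decreasing_on_independent {n : ℕ} (hn : 3 ≤ n) (x : Fin n → EuclideanSpace ℝ (Fin 2))
    (hx : ∀ i j : Fin n, i ≠ j →
      dist (x i) (x j) = (n : ℝ) ∨ Real.sqrt 2 * n ≤ dist (x i) (x j))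
    (A11 B11 C11 A12 B12 C12 : ℝ)
    (hA11 : 0 ≤ A11) (hB11 : 0 ≤ B11) (hC11 : 0 ≤ C11)
    (hA12 : 0 ≤ A12) (hB12 : 0 ≤ B12) (hC12 : 0 ≤ C12)
    (hE0 : pennyE0 A12 B12 C12 < 0)
    (h1 : -pennyE0 A12 B12 C12 ≤ pennyF A11 B11 C11 A12 B12 C12 n)
    (h2 : ∀ r : ℝ, Real.sqrt 2 * n ≤ r →
      (n : ℝ) ^ 2 * |pennyF A11 B11 C11 A12 B12 C12 r| ≤ -pennyE0 A12 B12 C12)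
    (h3 : ∀ r : ℝ, Real.sqrt 2 * n ≤ r → 0 < pennyF A11 B11 C11 A12 B12 C12 r)
    (T T' : Finset (Fin n)) (hTT : T ⊂ T')
    (hind : ∀ i ∈ T', ∀ j ∈ T', i ≠ j → Real.sqrt 2 * n ≤ dist (x i) (x j)) :
    pennyET A11 B11 C11 A12 B12 C12 x T' < pennyET A11 B11 C11 A12 B12 C12 x T :=
  penny_energy_decreasing_on_independent_general x A11 B11 C11 A12 B12 C12 hE0 h2 T T' hTT hind
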